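/- arXiv:1402.4600 — 3 statements merged into one kernel-verified Lean document; each statement's English description precedes it below -/
import Mathlib

section
/- (Potential matrix solution of Poisson's equation) Let P be a stochastic matrix on a finite state space X, fix a state α, and define \bar{P}(x,y) = P(x,y) − 1{x = α} P(α, y). If the matrix I − \bar{P} is invertible with inverse Z, and π is the invariant probability measure of P, then for any f : X → ℝ with π(f) = 0, the function H = Z f satisfies Poisson's equation H − P H = f up to an additive constant; more precisely, H − P H = f − c·1 where c = Σ_y P(α,y) H(y). -/
/-!
Applying `π` to `(1 - P̄) H = f` gives `π(α) c = π(f) = 0`, because `π` is `P`-invariant and so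
`π (1 - P̄) = π(α) P(α, ·)`. Moreover `π(α) ≠ 0`: otherwise `π (1 - P̄) = 0`, and multiplying by `Z`
would give `π = 0`. Hence `c = 0`, and `(1 - P̄) H = H - P H + c 1_α` is the claimed equation.
-/

open Matrix

section RowRemoval

variable {X R : Type*} [Fintype X] [DecidableEq X] [CommRing R] {P Pbar : Matrix X X R} {α : X}

theorem mulVec_eq_mulVec_sub_single
    (hPbar : ∀ x y, Pbar x y = P x y - (if x = α then 1 else 0) * P α y) (v : X → R) :
    Pbar *ᵥ v = P *ᵥ v - Pi.single α (P α ⬝ᵥ v) := by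
  ext x
  by_cases hx : x = α
  · subst hx
    simp [mulVec, dotProduct, hPbar]
  · simp [mulVec, dotProduct, hPbar, hx]

theorem vecMul_eq_vecMul_sub_smul
    (hPbar : ∀ x y, Pbar x y = P x y - (if x = α then 1 else 0) * P α y) (w : X → R) :
    w ᵥ* Pbar = w ᵥ* P - w α • P α := by
  ext y
  simp [vecMul, dotProduct, hPbar, mul_sub, Finset.sum_sub_distrib]

theorem vecMul_one_sub_eq_smul_row
    (hPbar : ∀ x y, Pbar x y = P x y - (if x = α then 1 else 0) * P α y)
    {π : X → R} (hπ : π ᵥ* P = π) :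
    π ᵥ* (1 - Pbar) = π α • P α := by
  rw [vecMul_sub, vecMul_one, vecMul_eq_vecMul_sub_smul hPbar, hπ, sub_sub_cancel]

end RowRemoval

section Field

variable {X K : Type*} [Fintype X] [DecidableEq X] [Field K] {P Pbar Z : Matrix X X K} {α : X}
  {π : X → K}

theorem apply_ne_zero_of_vecMul_eq_self
    (hPbar : ∀ x y, Pbar x y = P x y - (if x = α then 1 else 0) * P α y)
    (hZ : (1 - Pbar) * Z = 1) (hπ : π ᵥ* P = π) (hπ0 : π ≠ 0) :
    π α ≠ 0 := by
  intro hα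
  apply hπ0
  have hker : π ᵥ* (1 - Pbar) = 0 := by
    rw [vecMul_one_sub_eq_smul_row hPbar hπ, hα, zero_smul]
  calc π = π ᵥ* ((1 - Pbar) * Z) := by rw [hZ, vecMul_one]
    _ = 0 := by rw [← vecMul_vecMul, hker, zero_vecMul]

theorem row_dotProduct_mulVec_eq_zero
    (hPbar : ∀ x y, Pbar x y = P x y - (if x = α then 1 else 0) * P α y)
    (hZ : (1 - Pbar) * Z = 1) (hπ : π ᵥ* P = π) (hπ0 : π ≠ 0) {f : X → K} (hf : π ⬝ᵥ f = 0) :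
    P α ⬝ᵥ (Z *ᵥ f) = 0 := by
  have hα := apply_ne_zero_of_vecMul_eq_self hPbar hZ hπ hπ0
  have : π α * (P α ⬝ᵥ (Z *ᵥ f)) = 0 := by
    calc π α * (P α ⬝ᵥ (Z *ᵥ f)) = (π ᵥ* (1 - Pbar)) ⬝ᵥ (Z *ᵥ f) := by
          rw [vecMul_one_sub_eq_smul_row hPbar hπ, smul_dotProduct, smul_eq_mul]
      _ = π ⬝ᵥ f := by rw [← dotProduct_mulVec, mulVec_mulVec, hZ, one_mulVec]
      _ = 0 := hf
  exact (mul_eq_zero.mp this).resolve_left hα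

end Field

theorem stmt6_general {X : Type*} [Fintype X] [DecidableEq X] (P : Matrix X X ℝ)
    (α : X)
    (Pbar : Matrix X X ℝ)
    (hPbar : ∀ x y, Pbar x y = P x y - (if x = α then 1 else 0) * P α y)
    (Z : Matrix X X ℝ) (hZ1 : (1 - Pbar) * Z = 1)
    (π : X → ℝ) (hπsum : ∑ x, π x = 1)
    (hπinv : ∀ y, ∑ x, π x * P x y = π y)
    (f : X → ℝ) (hf : ∑ x, π x * f x = 0) :
    ∀ x, (Z.mulVec f) x - (P.mulVec (Z.mulVec f)) x
      = f x - ∑ y, P α y * (Z.mulVec f) y := by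
  have hπ : π ᵥ* P = π := funext hπinv
  have hπ0 : π ≠ 0 := by
    rintro rfl
    simp at hπsum
  have hc : P α ⬝ᵥ (Z *ᵥ f) = 0 := row_dotProduct_mulVec_eq_zero hPbar hZ1 hπ hπ0 hf
  have hPoisson : (1 - Pbar) *ᵥ (Z *ᵥ f) = f := by rw [mulVec_mulVec, hZ1, one_mulVec]
  rw [sub_mulVec, one_mulVec, mulVec_eq_mulVec_sub_single hPbar, hc, Pi.single_zero,
    sub_zero] at hPoisson
  intro x
  change _ = f x - P α ⬝ᵥ (Z *ᵥ f)
  rw [hc, sub_zero]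
  exact congrFun hPoisson x

/-- Potential-matrix solution of Poisson's equation:
with P̄ obtained by zeroing the α-row contribution and Z = (I − P̄)⁻¹,
H = Zf satisfies H − PH = f − c·1 with c = Σ_y P(α,y)H(y), whenever π(f)=0. -/
theorem stmt6 {X : Type*} [Fintype X] [DecidableEq X] (P : Matrix X X ℝ)
    (hPnn : ∀ x y, 0 ≤ P x y) (hProw : ∀ x, ∑ y, P x y = 1) (α : X)
    (Pbar : Matrix X X ℝ)
    (hPbar : ∀ x y, Pbar x y = P x y - (if x = α then 1 else 0) * P α y)
    (Z : Matrix X X ℝ) (hZ1 : (1 - Pbar) * Z = 1) (hZ2 : Z * (1 - Pbar) = 1)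
    (π : X → ℝ) (hπnn : ∀ x, 0 ≤ π x) (hπsum : ∑ x, π x = 1)
    (hπinv : ∀ y, ∑ x, π x * P x y = π y)
    (f : X → ℝ) (hf : ∑ x, π x * f x = 0) :
    ∀ x, (Z.mulVec f) x - (P.mulVec (Z.mulVec f)) x
      = f x - ∑ y, P α y * (Z.mulVec f) y :=
  stmt6_general P α Pbar hPbar Z hZ1 π hπsum hπinv f hf
end

section
/- (Bounded welfare gap) Let P be stochastic on finite X and suppose h : X → ℝ, Λ ∈ ℝ and U : X → ℝ satisfy h(x) − log(Σ_y P(x,y)e^{h(y)}) = ζU(x) − Λ for all x. Then for the Markov chain (X_t) with kernel P and any horizon T ≥ 1 and initial state x₀, |T·Λ − Λ_T| ≤ ‖h‖_sp, where Λ_T = log E_{x₀}[exp(ζ Σ_{t=1}^T U(X_t))] and ‖h‖_sp = max h − min h. -/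
/-! The path sum is `(K ^ T *ᵥ 1) x₀` for the tilted kernel `K x y = P x y * exp (ζ * U y)`.
The multiplicative Poisson equation says precisely that `g = P *ᵥ exp ∘ h` is an eigenvector of `K`
with eigenvalue `exp Λ`, and `exp (min h) ≤ g ≤ exp (max h)` because `P` is stochastic.
As `K` is entrywise nonnegative, sandwiching `1` between multiples of `g` traps `K ^ T *ᵥ 1`
between `exp (T * Λ ∓ ‖h‖_sp)`. -/

open Finset Matrix

namespace Matrix

variable {n : Type*} [Fintype n] {Q : Matrix n n ℝ}

theorem mulVec_mono_of_nonneg (hQ : ∀ i j, 0 ≤ Q i j) {v w : n → ℝ} (hvw : v ≤ w) :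
    Q *ᵥ v ≤ Q *ᵥ w :=
  fun i => Finset.sum_le_sum fun j _ => mul_le_mul_of_nonneg_left (hvw j) (hQ i j)

theorem mulVec_mem_Icc_of_stochastic (hQ : ∀ i j, 0 ≤ Q i j) (hrow : ∀ i, ∑ j, Q i j = 1)
    {v : n → ℝ} {a b : ℝ} (hv : ∀ j, v j ∈ Set.Icc a b) (i : n) :
    (Q *ᵥ v) i ∈ Set.Icc a b := by
  have hconst (c : ℝ) : (Q *ᵥ fun _ => c) i = c := by
    simp only [mulVec, dotProduct, ← Finset.sum_mul, hrow, one_mul]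
  exact ⟨hconst a ▸ mulVec_mono_of_nonneg hQ (fun j => (hv j).1) i,
    hconst b ▸ mulVec_mono_of_nonneg hQ (fun j => (hv j).2) i⟩

theorem pow_mulVec_mono_of_nonneg [DecidableEq n] (hQ : ∀ i j, 0 ≤ Q i j) {v w : n → ℝ}
    (hvw : v ≤ w) (T : ℕ) : Q ^ T *ᵥ v ≤ Q ^ T *ᵥ w := by
  induction T with
  | zero => simpa using hvw
  | succ T ih => simpa only [pow_succ', ← mulVec_mulVec] using mulVec_mono_of_nonneg hQ ih

theorem pow_mulVec_of_mulVec_eq_smul [DecidableEq n] {g : n → ℝ} {μ : ℝ} (hg : Q *ᵥ g = μ • g)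
    (T : ℕ) : Q ^ T *ᵥ g = μ ^ T • g := by
  induction T with
  | zero => simp
  | succ T ih => rw [pow_succ', ← mulVec_mulVec, ih, mulVec_smul, hg, smul_smul, pow_succ]

theorem pow_mulVec_one_mem_Icc_of_mulVec_eq_smul [DecidableEq n] (hQ : ∀ i j, 0 ≤ Q i j)
    {g : n → ℝ} {μ a b : ℝ} (hμ : 0 ≤ μ) (ha : 0 < a) (hg : ∀ i, g i ∈ Set.Icc a b)
    (hQg : Q *ᵥ g = μ • g) (T : ℕ) (i : n) :
    (Q ^ T *ᵥ 1) i ∈ Set.Icc (μ ^ T * (a / b)) (μ ^ T * (b / a)) := by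
  have hb : 0 < b := ha.trans_le ((hg i).1.trans (hg i).2)
  have hpow (c : ℝ) : (Q ^ T *ᵥ (c • g)) i = μ ^ T * (c * g i) := by
    rw [mulVec_smul, pow_mulVec_of_mulVec_eq_smul hQg, smul_smul, Pi.smul_apply, smul_eq_mul]
    ring
  have hlow : b⁻¹ • g ≤ 1 := fun j => by
    simpa [inv_mul_le_iff₀ hb] using (hg j).2
  have hup : 1 ≤ a⁻¹ • g := fun j => by
    simpa [le_inv_mul_iff₀ ha] using (hg j).1
  constructor
  · calc μ ^ T * (a / b) ≤ μ ^ T * (b⁻¹ * g i) := by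
          gcongr; rw [div_eq_inv_mul]; gcongr; exact (hg i).1
      _ ≤ (Q ^ T *ᵥ 1) i := hpow b⁻¹ ▸ pow_mulVec_mono_of_nonneg hQ hlow T i
  · calc (Q ^ T *ᵥ 1) i ≤ μ ^ T * (a⁻¹ * g i) := hpow a⁻¹ ▸ pow_mulVec_mono_of_nonneg hQ hup T i
      _ ≤ μ ^ T * (b / a) := by
          gcongr; rw [div_eq_inv_mul]; gcongr; exact (hg i).2

end Matrix

theorem abs_sub_log_le_of_exp_bounds {a d G : ℝ} (hlow : Real.exp (a - d) ≤ G)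
    (hup : G ≤ Real.exp (a + d)) : |a - Real.log G| ≤ d := by
  have hG : 0 < G := (Real.exp_pos _).trans_le hlow
  rw [← Real.le_log_iff_exp_le hG] at hlow
  rw [← Real.log_le_iff_le_exp hG] at hup
  rw [abs_le]; constructor <;> linarith

section TiltedKernel

variable {X : Type*} [Fintype X]

def tiltedKernel (P : X → X → ℝ) (w : X → ℝ) : Matrix X X ℝ :=
  Matrix.of fun x y => P x y * w y

theorem sum_paths_eq_tiltedKernel_pow_mulVec [DecidableEq X] (P : X → X → ℝ) (w : X → ℝ)
    (T : ℕ) (x : X) :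
    ∑ f : Fin T → X, (∏ i : Fin T, P ((Fin.cons x f : Fin (T + 1) → X) i.castSucc) (f i))
        * ∏ i : Fin T, w (f i)
      = (tiltedKernel P w ^ T *ᵥ 1) x := by
  induction T generalizing x with
  | zero => simp
  | succ T ih =>
    rw [pow_succ', ← mulVec_mulVec, ← (Fin.consEquiv fun _ => X).sum_comp, Fintype.sum_prod_type]
    refine Finset.sum_congr rfl fun y _ => ?_
    rw [← ih, Finset.mul_sum]
    refine Finset.sum_congr rfl fun f _ => ?_
    simp only [tiltedKernel, of_apply, Fin.consEquiv_apply, Fin.prod_univ_succ, Fin.cons_zero,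
      Fin.cons_succ, Fin.castSucc_zero, ← Fin.succ_castSucc]
    ring

theorem tiltedKernel_mulVec_eq_exp_smul {P : X → X → ℝ} {ζ Λ : ℝ} {U h : X → ℝ}
    (hpos : ∀ x, 0 < ∑ y, P x y * Real.exp (h y))
    (hMPE : ∀ x, h x - Real.log (∑ y, P x y * Real.exp (h y)) = ζ * U x - Λ) :
    tiltedKernel P (fun y => Real.exp (ζ * U y)) *ᵥ (P *ᵥ fun y => Real.exp (h y))
      = Real.exp Λ • (P *ᵥ fun y => Real.exp (h y)) := by
  have hexp (y : X) :
      Real.exp (ζ * U y) * ∑ z, P y z * Real.exp (h z) = Real.exp Λ * Real.exp (h y) := by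
    rw [show ζ * U y = h y - Real.log (∑ z, P y z * Real.exp (h z)) + Λ by linarith [hMPE y],
      Real.exp_add, Real.exp_sub, Real.exp_log (hpos y)]
    field_simp [(hpos y).ne']
  ext x
  simp only [mulVec, dotProduct, tiltedKernel, of_apply, Pi.smul_apply, smul_eq_mul]
  rw [mul_sum]
  exact sum_congr rfl fun y _ => by rw [mul_assoc, hexp]; ring

end TiltedKernel

theorem stmt18_general {X : Type*} [Fintype X] [Nonempty X] (P : X → X → ℝ)
    (hPnn : ∀ x y, 0 ≤ P x y) (hProw : ∀ x, ∑ y, P x y = 1)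
    (ζ : ℝ) (U : X → ℝ) (h : X → ℝ) (Λ : ℝ)
    (hMPE : ∀ x, h x - Real.log (∑ y, P x y * Real.exp (h y)) = ζ * U x - Λ)
    (T : ℕ) (x₀ : X) :
    |(T : ℝ) * Λ -
        Real.log (∑ f : Fin T → X,
          (∏ i : Fin T, P ((Fin.cons x₀ f : Fin (T + 1) → X) i.castSucc) (f i))
            * Real.exp (ζ * ∑ i : Fin T, U (f i)))|
      ≤ (Finset.univ.sup' Finset.univ_nonempty h)
        - (Finset.univ.inf' Finset.univ_nonempty h) := by
  classical
  set M := Finset.univ.sup' Finset.univ_nonempty h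
  set m := Finset.univ.inf' Finset.univ_nonempty h
  set g : X → ℝ := P *ᵥ fun y => Real.exp (h y)
  set K := tiltedKernel P fun y => Real.exp (ζ * U y)
  have hg (x : X) : g x ∈ Set.Icc (Real.exp m) (Real.exp M) :=
    mulVec_mem_Icc_of_stochastic hPnn hProw (fun y =>
      ⟨Real.exp_le_exp.2 (inf'_le h (mem_univ y)), Real.exp_le_exp.2 (le_sup' h (mem_univ y))⟩) x
  have hK : ∀ x y, 0 ≤ K x y := fun x y => mul_nonneg (hPnn x y) (Real.exp_pos _).le
  have hKg : K *ᵥ g = Real.exp Λ • g :=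
    tiltedKernel_mulVec_eq_exp_smul (fun x => (Real.exp_pos m).trans_le (hg x).1) hMPE
  have hpath := sum_paths_eq_tiltedKernel_pow_mulVec P (fun y => Real.exp (ζ * U y)) T x₀
  simp only [← Real.exp_sum, ← mul_sum] at hpath
  rw [hpath]
  have hbounds := pow_mulVec_one_mem_Icc_of_mulVec_eq_smul hK (Real.exp_pos Λ).le
    (Real.exp_pos m) hg hKg T x₀
  simp only [← Real.exp_nat_mul, ← Real.exp_sub, ← Real.exp_add] at hbounds
  rw [← neg_sub M m, ← sub_eq_add_neg] at hbounds
  exact abs_sub_log_le_of_exp_bounds hbounds.1 hbounds.2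

/-- Bounded welfare gap: if h, Λ solve the multiplicative Poisson
equation h(x) − log Σ_y P(x,y)e^{h(y)} = ζU(x) − Λ, then for any horizon T and
initial state x₀, |TΛ − Λ_T| ≤ ‖h‖_sp, where
Λ_T = log E_{x₀}[exp(ζ Σ_{t=1}^T U(X_t))] (expressed as a sum over paths). -/
theorem stmt18 {X : Type*} [Fintype X] [Nonempty X] (P : X → X → ℝ)
    (hPnn : ∀ x y, 0 ≤ P x y) (hProw : ∀ x, ∑ y, P x y = 1)
    (ζ : ℝ) (U : X → ℝ) (h : X → ℝ) (Λ : ℝ)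
    (hMPE : ∀ x, h x - Real.log (∑ y, P x y * Real.exp (h y)) = ζ * U x - Λ)
    (T : ℕ) (hT : 1 ≤ T) (x₀ : X) :
    |(T : ℝ) * Λ -
        Real.log (∑ f : Fin T → X,
          (∏ i : Fin T, P ((Fin.cons x₀ f : Fin (T + 1) → X) i.castSucc) (f i))
            * Real.exp (ζ * ∑ i : Fin T, U (f i)))|
      ≤ (Finset.univ.sup' Finset.univ_nonempty h)
        - (Finset.univ.inf' Finset.univ_nonempty h) :=
  stmt18_general P hPnn hProw ζ U h Λ hMPE T x₀
end

section
/- (Linearization of the measure recursion) Let {P_ζ} be a family of stochastic matrices on finite X with P_ζ = P_0 + ζ E + R(ζ) where ‖R(ζ)‖ ≤ Cζ², and let π₀ be invariant for P_0. Define μ_{t+1} = μ_t P_{ζ_t} for a bounded sequence (ζ_t) with μ_0 = π₀ + Φ_0 where ‖Φ_0‖ ≤ Cδ and |ζ_t| ≤ δ. Define Φ_{t+1}ᵀ = P_0ᵀ Φ_t + B ζ_t with B_j = Σ_x π₀(x) E(x, x^j), Φ treated as a column vector. Then for each fixed t there is a constant C_t with ‖μ_t − π₀ − Φ_t‖ ≤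 C_t δ² for all δ ∈ (0,1]. -/
/-!
Put `e_t = μ_t - π₀ - Φ_t`. Since `π₀ P₀ = π₀`, the error obeys the exact recursion
`e_{t+1} = e_t P_ζ + Φ_t (P_ζ - P₀) + π₀ R(ζ)` with `ζ = ζ_t`. On a finite state space every
matrix acts boundedly on sup-normed row vectors, so `‖Φ_t‖ = O(δ)` by induction; the last two
terms are then `O(δ²)`, and so is `e_t`, with constants that depend on `t` only.
-/

open Finset Matrix

-- The entrywise sup norm: it agrees with the norm of `X → X → ℝ`.
attribute [local instance] Matrix.normedAddCommGroup Matrix.normedSpace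

def linearRecBound (K c : ℝ) (L : ℕ → ℝ) : ℕ → ℝ
  | 0 => c
  | t + 1 => K * linearRecBound K c L t + L t

theorem le_linearRecBound_mul {a L : ℕ → ℝ} {K c ε : ℝ} (hK : 0 ≤ K) (h0 : a 0 ≤ c * ε)
    (hstep : ∀ s, a (s + 1) ≤ K * a s + L s * ε) : ∀ t, a t ≤ linearRecBound K c L t * ε
  | 0 => h0
  | t + 1 =>
    calc a (t + 1) ≤ K * a t + L t * ε := hstep t
      _ ≤ K * (linearRecBound K c L t * ε) + L t * ε := by
        gcongr; exact le_linearRecBound_mul hK h0 hstep t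
      _ = linearRecBound K c L (t + 1) * ε := by rw [linearRecBound]; ring

theorem norm_smul_add_le {V : Type*} [SeminormedAddCommGroup V] [NormedSpace ℝ V] {E R : V}
    {ζ C δ : ℝ} (hC : 0 ≤ C) (hζ : |ζ| ≤ δ) (hδ1 : δ ≤ 1) (hR : ‖R‖ ≤ C * δ ^ 2) :
    ‖ζ • E + R‖ ≤ (‖E‖ + C) * δ := by
  have hδ : 0 ≤ δ := (abs_nonneg ζ).trans hζ
  calc ‖ζ • E + R‖ ≤ |ζ| * ‖E‖ + C * δ ^ 2 := by
        grw [norm_add_le, norm_smul, Real.norm_eq_abs, hR]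
    _ ≤ δ * ‖E‖ + C * δ := by
        gcongr
        nlinarith
    _ = (‖E‖ + C) * δ := by ring

theorem linearizationError_succ_eq {X α : Type*} [Fintype X] [CommRing α] {π μ Φ : X → α}
    {P0 E D : Matrix X X α} (ζ : α) (hπ : π ᵥ* P0 = π) :
    μ ᵥ* (P0 + D) - π - (Φ ᵥ* P0 + ζ • π ᵥ* E) =
      (μ - π - Φ) ᵥ* (P0 + D) + Φ ᵥ* D + π ᵥ* (D - ζ • E) := by
  simp only [sub_vecMul, vecMul_add, vecMul_sub, vecMul_smul, hπ]
  abel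

section Linearization

variable {X : Type*} [Fintype X] {P0 E : Matrix X X ℝ} {π0 : X → ℝ}

theorem norm_vecMul_le (v : X → ℝ) (M : Matrix X X ℝ) :
    ‖v ᵥ* M‖ ≤ Fintype.card X * (‖v‖ * ‖M‖) := by
  refine (pi_norm_le_iff_of_nonneg (by positivity)).2 fun x => ?_
  calc ‖(v ᵥ* M) x‖ = ‖∑ y, v y * M y x‖ := rfl
    _ ≤ ∑ y, ‖v y * M y x‖ := norm_sum_le _ _
    _ ≤ ∑ _y : X, ‖v‖ * ‖M‖ := sum_le_sum fun y _ => by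
        rw [norm_mul]
        exact mul_le_mul (norm_le_pi_norm v y) (norm_entry_le_entrywise_sup_norm M)
          (norm_nonneg _) (norm_nonneg _)
    _ = Fintype.card X * (‖v‖ * ‖M‖) := by simp

theorem norm_linearSystem_le {Φ : ℕ → X → ℝ} {ζs : ℕ → ℝ} {c δ : ℝ}
    (hΦ : ∀ s, Φ (s + 1) = Φ s ᵥ* P0 + ζs s • π0 ᵥ* E) (hζ : ∀ s, |ζs s| ≤ δ)
    (h0 : ‖Φ 0‖ ≤ c * δ) (t : ℕ) :
    ‖Φ t‖ ≤ linearRecBound (Fintype.card X * ‖P0‖) c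
      (fun _ => Fintype.card X * (‖π0‖ * ‖E‖)) t * δ := by
  have hK : 0 ≤ (Fintype.card X : ℝ) * ‖P0‖ := by positivity
  refine le_linearRecBound_mul (a := fun s => ‖Φ s‖) hK h0 (fun s => ?_) t
  calc ‖Φ (s + 1)‖ ≤ ‖Φ s ᵥ* P0‖ + |ζs s| * ‖π0 ᵥ* E‖ := by
        rw [hΦ, ← Real.norm_eq_abs, ← norm_smul]; exact norm_add_le _ _
    _ ≤ Fintype.card X * (‖Φ s‖ * ‖P0‖) + δ * (Fintype.card X * (‖π0‖ * ‖E‖)) := by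
        grw [norm_vecMul_le, norm_vecMul_le, hζ s]
    _ = Fintype.card X * ‖P0‖ * ‖Φ s‖ + Fintype.card X * (‖π0‖ * ‖E‖) * δ := by ring

theorem norm_linearizationError_succ_le {μ Φ : X → ℝ} {D : Matrix X X ℝ} {ζ K C M δ : ℝ}
    (hπ : π0 ᵥ* P0 = π0) (hK : 0 ≤ K) (hδ1 : δ ≤ 1) (hD : ‖D‖ ≤ K * δ)
    (hR : ‖D - ζ • E‖ ≤ C * δ ^ 2) (hΦ : ‖Φ‖ ≤ M * δ) :
    ‖μ ᵥ* (P0 + D) - π0 - (Φ ᵥ* P0 + ζ • π0 ᵥ* E)‖ ≤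
      Fintype.card X * (‖P0‖ + K) * ‖μ - π0 - Φ‖ +
        Fintype.card X * (M * K + ‖π0‖ * C) * δ ^ 2 := by
  have hPD : ‖P0 + D‖ ≤ ‖P0‖ + K := by
    grw [norm_add_le, hD]
    nlinarith
  have hΦD : ‖Φ‖ * ‖D‖ ≤ M * K * δ ^ 2 :=
    calc ‖Φ‖ * ‖D‖ ≤ (M * δ) * (K * δ) :=
          mul_le_mul hΦ hD (norm_nonneg _) ((norm_nonneg _).trans hΦ)
      _ = M * K * δ ^ 2 := by ring
  rw [linearizationError_succ_eq ζ hπ]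
  grw [norm_add_le, norm_add_le, norm_vecMul_le, norm_vecMul_le, norm_vecMul_le, hPD, hR, hΦD]
  exact le_of_eq (by ring)

theorem norm_linearizationError_le {P R : ℝ → Matrix X X ℝ} {ζs : ℕ → ℝ} {μ Φ : ℕ → X → ℝ}
    {C c δ : ℝ} (hC : 0 ≤ C) (hP : ∀ ζ, P ζ = P0 + (ζ • E + R ζ)) (hR : ∀ ζ, ‖R ζ‖ ≤ C * ζ ^ 2)
    (hπ : π0 ᵥ* P0 = π0) (hδ1 : δ ≤ 1) (hζ : ∀ s, |ζs s| ≤ δ) (hΦ0 : ‖Φ 0‖ ≤ c * δ)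
    (hμ0 : μ 0 = π0 + Φ 0) (hμ : ∀ s, μ (s + 1) = μ s ᵥ* P (ζs s))
    (hΦ : ∀ s, Φ (s + 1) = Φ s ᵥ* P0 + ζs s • π0 ᵥ* E) (t : ℕ) :
    ‖μ t - π0 - Φ t‖ ≤ linearRecBound (Fintype.card X * (‖P0‖ + (‖E‖ + C))) 0
      (fun s => Fintype.card X * (linearRecBound (Fintype.card X * ‖P0‖) c
        (fun _ => Fintype.card X * (‖π0‖ * ‖E‖)) s * (‖E‖ + C) + ‖π0‖ * C)) t * δ ^ 2 := by
  have hRδ (s : ℕ) : ‖R (ζs s)‖ ≤ C * δ ^ 2 := (hR _).trans <|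
    mul_le_mul_of_nonneg_left (sq_le_sq' (abs_le.1 (hζ s)).1 (abs_le.1 (hζ s)).2) hC
  have hK : 0 ≤ (Fintype.card X : ℝ) * (‖P0‖ + (‖E‖ + C)) := by positivity
  refine le_linearRecBound_mul (a := fun s => ‖μ s - π0 - Φ s‖) hK (by simp [hμ0]) (fun s => ?_) t
  rw [hμ, hP, hΦ]
  exact norm_linearizationError_succ_le hπ (by positivity) hδ1
    (norm_smul_add_le hC (hζ s) hδ1 (hRδ s)) (by simpa using hRδ s)
    (norm_linearSystem_le hΦ hζ hΦ0 s)

end Linearization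

theorem stmt19_general {X : Type*} [Fintype X] (C : ℝ)
    (P : ℝ → X → X → ℝ) (P0 E : X → X → ℝ) (R : ℝ → X → X → ℝ)
    (hdec : ∀ ζ x y, P ζ x y = P0 x y + ζ * E x y + R ζ x y)
    (hR : ∀ ζ x y, |R ζ x y| ≤ C * ζ ^ 2)
    (π0 : X → ℝ)
    (hπinv : ∀ y, ∑ x, π0 x * P0 x y = π0 y) :
    ∀ t : ℕ, ∃ Ct : ℝ, ∀ δ : ℝ, 0 < δ → δ ≤ 1 →
      ∀ ζs : ℕ → ℝ, (∀ s, |ζs s| ≤ δ) →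
      ∀ μ Φ : ℕ → X → ℝ,
        (∀ x, |Φ 0 x| ≤ C * δ) →
        (∀ x, μ 0 x = π0 x + Φ 0 x) →
        (∀ s x, μ (s + 1) x = ∑ y, μ s y * P (ζs s) y x) →
        (∀ s x, Φ (s + 1) x = (∑ y, P0 y x * Φ s y) + (∑ y, π0 y * E y x) * ζs s) →
        ∀ x, |μ t x - π0 x - Φ t x| ≤ Ct * δ ^ 2 := by
  let A : Matrix X X ℝ := P0
  let B : Matrix X X ℝ := E
  let Q : ℝ → Matrix X X ℝ := R
  have hP (ζ : ℝ) : (P ζ : Matrix X X ℝ) = A + (ζ • B + Q ζ) := by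
    ext x y
    exact (hdec ζ x y).trans (add_assoc _ _ _)
  have hQ (ζ : ℝ) : ‖Q ζ‖ ≤ |C| * ζ ^ 2 :=
    (norm_le_iff (by positivity)).2 fun x y => (hR ζ x y).trans (by gcongr; exact le_abs_self C)
  intro t
  refine ⟨_, fun δ _ hδ1 ζs hζ μ Φ hΦ0 hμ0 hμ hΦ x => (norm_le_pi_norm _ x).trans <|
    norm_linearizationError_le (c := |C|) (abs_nonneg C) hP hQ (funext hπinv) hδ1 hζ ?_
      (funext hμ0) (fun s => funext (hμ s)) (fun s => ?_) t⟩
  · exact (pi_norm_le_iff_of_nonneg (by positivity)).2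
      fun x => (hΦ0 x).trans (by gcongr; exact le_abs_self C)
  · ext x
    simp [A, B, hΦ, vecMul, dotProduct, mul_comm]

/-- Linearization of the measure recursion: if P_ζ = P₀ + ζE + R(ζ)
with entrywise ‖R(ζ)‖ ≤ Cζ², π₀ invariant for P₀, |ζ_t| ≤ δ and ‖Φ₀‖ ≤ Cδ, then the
nonlinear recursion μ_{t+1} = μ_t P_{ζ_t} is tracked by the linear system
Φ_{t+1} = P₀ᵀΦ_t + Bζ_t up to an O(δ²) error: ‖μ_t − π₀ − Φ_t‖ ≤ C_t δ². -/
theorem stmt19 {X : Type*} [Fintype X] (C : ℝ) (hC : 0 ≤ C)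
    (P : ℝ → X → X → ℝ) (P0 E : X → X → ℝ) (R : ℝ → X → X → ℝ)
    (hdec : ∀ ζ x y, P ζ x y = P0 x y + ζ * E x y + R ζ x y)
    (hR : ∀ ζ x y, |R ζ x y| ≤ C * ζ ^ 2)
    (hnn : ∀ ζ x y, 0 ≤ P ζ x y) (hrow : ∀ ζ x, ∑ y, P ζ x y = 1)
    (hP0nn : ∀ x y, 0 ≤ P0 x y) (hP0row : ∀ x, ∑ y, P0 x y = 1)
    (hErow : ∀ x, ∑ y, E x y = 0)
    (π0 : X → ℝ) (hπnn : ∀ x, 0 ≤ π0 x) (hπsum : ∑ x, π0 x = 1)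
    (hπinv : ∀ y, ∑ x, π0 x * P0 x y = π0 y) :
    ∀ t : ℕ, ∃ Ct : ℝ, ∀ δ : ℝ, 0 < δ → δ ≤ 1 →
      ∀ ζs : ℕ → ℝ, (∀ s, |ζs s| ≤ δ) →
      ∀ μ Φ : ℕ → X → ℝ,
        (∀ x, |Φ 0 x| ≤ C * δ) →
        (∀ x, μ 0 x = π0 x + Φ 0 x) →
        (∀ s x, μ (s + 1) x = ∑ y, μ s y * P (ζs s) y x) →
        (∀ s x, Φ (s + 1) x = (∑ y, P0 y x * Φ s y) + (∑ y, π0 y * E y x) * ζs s) →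
        ∀ x, |μ t x - π0 x - Φ t x| ≤ Ct * δ ^ 2 :=
  stmt19_general C P P0 E R hdec hR π0 hπinv
end
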